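/- arXiv:math/0507486 — 5 statements merged into one kernel-verified Lean document; each statement's English description precedes it below -/
import Mathlib

section
/- For distinct primes ℓ and m, the ideal of ℤ[x] generated by x^ℓ - 1 and x^m - 1 equals the ideal generated by x - 1. -/
open Polynomial

private lemma key (a b : ℕ) :
    Ideal.span {(X : ℤ[X]) ^ a - 1, X ^ b - 1} =
      Ideal.span {(X : ℤ[X]) ^ (Nat.gcd a b) - 1} := by
  induction a, b using Nat.gcd.induction with
  | H0 n =>
      rw [Nat.gcd_zero_left, pow_zero, sub_self]
      exact Submodule.span_insert_zero
  | H1 m n hm ih =>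
      rw [Nat.gcd_rec, ← ih]
      set q := n / m with hq
      set r := n % m with hr
      have hn : m * q + r = n := Nat.div_add_mod n m
      obtain ⟨c, hc⟩ : (X : ℤ[X]) ^ m - 1 ∣ X ^ (m * q) - 1 := by
        have := sub_dvd_pow_sub_pow ((X : ℤ[X]) ^ m) 1 q
        simpa [← pow_mul] using this
      apply le_antisymm <;> rw [Ideal.span_le, Set.insert_subset_iff, Set.singleton_subset_iff]
      · constructor
        · -- X^m - 1 ∈ span {X^r - 1, X^m - 1}
          rw [SetLike.mem_coe, Ideal.mem_span_pair]
          exact ⟨0, 1, by ring⟩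
        · -- X^n - 1 ∈ span {X^r - 1, X^m - 1}
          rw [SetLike.mem_coe, Ideal.mem_span_pair]
          refine ⟨1, X ^ r * c, ?_⟩
          rw [← hn, pow_add]
          linear_combination (-(X : ℤ[X]) ^ r) * hc
      · constructor
        · -- X^r - 1 ∈ span {X^m - 1, X^n - 1}
          rw [SetLike.mem_coe, Ideal.mem_span_pair]
          refine ⟨-(X ^ r * c), 1, ?_⟩
          rw [← hn, pow_add]
          linear_combination (X : ℤ[X]) ^ r * hc
        · -- X^m - 1 ∈ span {X^m - 1, X^n - 1}
          rw [SetLike.mem_coe, Ideal.mem_span_pair]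
          exact ⟨1, 0, by ring⟩

open Polynomial in
theorem stmt_0 (l m : ℕ) (hl : l.Prime) (hm : m.Prime) (hlm : l ≠ m) :
    Ideal.span {(X : ℤ[X]) ^ l - 1, X ^ m - 1} = Ideal.span {(X : ℤ[X]) - 1} := by
  have h := key l m
  rwa [((Nat.coprime_primes hl hm).mpr hlm : Nat.gcd l m = 1), pow_one] at h
end

section
/- For any natural numbers a and b, the gcd of x^a - 1 and x^b - 1 in ℤ[x] is x^(gcd(a,b)) - 1. -/
open Polynomial

lemma dvd_aux {m n : ℕ} (h : m ∣ n) : (X : ℤ[X]) ^ m - 1 ∣ X ^ n - 1 := by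
  obtain ⟨k, rfl⟩ := h
  rw [pow_mul]
  simpa using sub_dvd_pow_sub_pow ((X:ℤ[X])^m) 1 k

lemma span_mod (a b : ℕ) :
    Ideal.span {(X : ℤ[X]) ^ a - 1, X ^ b - 1} =
      Ideal.span {(X : ℤ[X]) ^ a - 1, X ^ (b % a) - 1} := by
  have key : (X:ℤ[X]) ^ b - 1 = X ^ (b % a) * (X ^ (a * (b / a)) - 1) + (X ^ (b % a) - 1) := by
    rw [mul_sub, mul_one, ← pow_add, Nat.mod_add_div]
    ring
  have hdvd : (X:ℤ[X]) ^ a - 1 ∣ X ^ (a * (b / a)) - 1 := dvd_aux ⟨_, rfl⟩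
  obtain ⟨c, hc⟩ := hdvd
  apply le_antisymm <;> rw [Ideal.span_le] <;> intro p hp <;>
    simp only [Set.mem_insert_iff, Set.mem_singleton_iff] at hp <;>
    rcases hp with rfl | rfl
  · exact Ideal.subset_span (by simp)
  · rw [key, hc]
    exact Ideal.add_mem _
      (Ideal.mul_mem_left _ _ (Ideal.mul_mem_right _ _ (Ideal.subset_span (by simp))))
      (Ideal.subset_span (by simp))
  · exact Ideal.subset_span (by simp)
  · have : (X:ℤ[X]) ^ (b % a) - 1 = (X ^ b - 1) - X ^ (b % a) * (X ^ (a * (b / a)) - 1) := by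
      rw [key]; ring
    rw [this, hc]
    exact Ideal.sub_mem _ (Ideal.subset_span (by simp))
      (Ideal.mul_mem_left _ _ (Ideal.mul_mem_right _ _ (Ideal.subset_span (by simp))))

open Polynomial in
theorem stmt_1 (a b : ℕ) :
    Ideal.span {(X : ℤ[X]) ^ a - 1, X ^ b - 1} =
      Ideal.span {(X : ℤ[X]) ^ Nat.gcd a b - 1} := by
  induction a, b using Nat.gcd.induction with
  | H0 b => simp [Ideal.span_insert, Set.singleton_zero, Ideal.span_zero]
  | H1 a b ha ih =>
    rw [Nat.gcd_rec]
    rw [span_mod, Set.pair_comm, ih]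
end

section
/- Let K be a field and q(x_1,...,x_n) a quadratic form over K, and L a finite field extension of K of odd degree. If q has a nontrivial zero over L, then q has a nontrivial zero over K. -/
/-!
Springer's argument. Climbing a tower of simple extensions, it suffices to treat
`K[X]/(f)` with `f` irreducible of odd degree `d`, by induction on `d`. A zero there lifts to a
primitive vector `g` of polynomials of degree `< d` with `f ∣ q(g)`. Let `m` be the largest degree
among the `gᵢ`. If their coefficients at `m` do not already give a zero of `q` over `K`, then
`q(g)` has degree exactly `2m < 2d`. So the cofactor `q(g) / f` has odd degree `< d`, and one of
its irreducible factors `p` has odd degree. Since `g` is primitive, `g mod p` is a nontrivial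
zero over `K[X]/(p)`.
-/

open Polynomial

universe u

namespace Polynomial

theorem coeff_prod_sum_of_natDegree_le {R ι : Type*} [CommSemiring R] (s : Finset ι)
    (f : ι → R[X]) (d : ι → ℕ) (h : ∀ i ∈ s, (f i).natDegree ≤ d i) :
    (∏ i ∈ s, f i).coeff (∑ i ∈ s, d i) = ∏ i ∈ s, (f i).coeff (d i) := by
  induction s using Finset.cons_induction with
  | empty => simp
  | cons a s _ ih =>
    have hs : ∀ i ∈ s, (f i).natDegree ≤ d i := fun i hi => h i (Finset.mem_cons_of_mem hi)
    rw [Finset.prod_cons, Finset.sum_cons, Finset.prod_cons, ← ih hs,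
      coeff_mul_add_eq_of_natDegree_le (h a (Finset.mem_cons_self a s))
        ((natDegree_prod_le s f).trans (Finset.sum_le_sum hs))]

theorem exists_ne_zero_forall_natDegree_le {R ι : Type*} [Semiring R] [Fintype ι]
    {g : ι → R[X]} (hg : g ≠ 0) :
    ∃ i, g i ≠ 0 ∧ ∀ j, (g j).natDegree ≤ (g i).natDegree := by
  obtain ⟨j, hj⟩ := Function.ne_iff.mp hg
  obtain ⟨i, -, hi⟩ :=
    Finset.univ.exists_max_image (fun i => (g i).degree) ⟨j, Finset.mem_univ j⟩
  refine ⟨i, fun hi0 => hj ?_, fun k => natDegree_le_natDegree (hi k (Finset.mem_univ k))⟩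
  simpa [hi0] using hi j (Finset.mem_univ j)

theorem exists_irreducible_dvd_of_odd_natDegree {K : Type*} [Field K] {f : K[X]}
    (hf : Odd f.natDegree) : ∃ p, Irreducible p ∧ p ∣ f ∧ Odd p.natDegree := by
  induction f using UniqueFactorizationMonoid.induction_on_prime with
  | h₁ => simp at hf
  | h₂ u hu => simp [natDegree_eq_zero_of_isUnit hu] at hf
  | h₃ x p _ hp ih =>
    rcases eq_or_ne x 0 with rfl | hx0
    · simp at hf
    rw [natDegree_mul hp.ne_zero hx0, Nat.odd_add'] at hf
    by_cases hpodd : Odd p.natDegree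
    · exact ⟨p, hp.irreducible, dvd_mul_right p x, hpodd⟩
    · obtain ⟨r, hr, hrx, hrodd⟩ := ih (hf.mpr (Nat.not_odd_iff_even.mp hpodd))
      exact ⟨r, hr, hrx.mul_left p, hrodd⟩

end Polynomial

namespace MvPolynomial.IsHomogeneous

variable {σ R : Type*} [CommSemiring R] {q : MvPolynomial σ R} {k : ℕ}

theorem eval_mul_left (hq : q.IsHomogeneous k) (c : R) (v : σ → R) :
    eval (fun i => c * v i) q = c ^ k * eval v q := by
  rw [eval_eq, eval_eq, Finset.mul_sum]
  refine Finset.sum_congr rfl fun d hd => ?_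
  simp_rw [mul_pow, Finset.prod_mul_distrib, Finset.prod_pow_eq_pow_sum,
    ← hq.degree_eq_sum_deg_support hd]
  ring

variable {g : σ → R[X]} {m : ℕ}

theorem natDegree_eval_map_C_le (hq : q.IsHomogeneous k) (hg : ∀ i, (g i).natDegree ≤ m) :
    (eval g (q.map Polynomial.C)).natDegree ≤ k * m := by
  rw [eval_map, eval₂_eq]
  refine natDegree_sum_le_of_forall_le _ _ fun d hd => ?_
  refine natDegree_C_mul_le _ _ |>.trans <| (natDegree_prod_le _ _).trans ?_
  rw [hq.degree_eq_sum_deg_support hd, Finset.sum_mul]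
  exact Finset.sum_le_sum fun i _ => natDegree_pow_le.trans (Nat.mul_le_mul_left _ (hg i))

theorem coeff_eval_map_C (hq : q.IsHomogeneous k) (hg : ∀ i, (g i).natDegree ≤ m) :
    (eval g (q.map Polynomial.C)).coeff (k * m) = eval (fun i => (g i).coeff m) q := by
  rw [eval_map, eval₂_eq, eval_eq, finsetSum_coeff]
  refine Finset.sum_congr rfl fun d hd => ?_
  rw [Polynomial.coeff_C_mul, hq.degree_eq_sum_deg_support hd, Finset.sum_mul,
    coeff_prod_sum_of_natDegree_le _ _ _ fun i _ =>
      natDegree_pow_le.trans (Nat.mul_le_mul_left _ (hg i))]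
  simp_rw [coeff_pow_of_natDegree_le (hg _)]

end MvPolynomial.IsHomogeneous

namespace MvPolynomial

variable {σ K : Type*} [CommSemiring K]

def HasNontrivialZero (q : MvPolynomial σ K) (A : Type*) [CommSemiring A] [Algebra K A] : Prop :=
  ∃ v : σ → A, v ≠ 0 ∧ aeval v q = 0

variable {q : MvPolynomial σ K}

theorem HasNontrivialZero.map {A B : Type*} [CommSemiring A] [CommSemiring B] [Algebra K A]
    [Algebra K B] (h : q.HasNontrivialZero A) (φ : A →ₐ[K] B) (hφ : Function.Injective φ) :
    q.HasNontrivialZero B := by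
  obtain ⟨v, hv0, hv⟩ := h
  obtain ⟨i, hi⟩ := Function.ne_iff.mp hv0
  exact ⟨fun i => φ (v i), Function.ne_iff.mpr ⟨i, (map_ne_zero_iff φ hφ).mpr hi⟩,
    by rw [← comp_aeval_apply, hv, map_zero]⟩

theorem hasNontrivialZero_map_algebraMap_iff {E A : Type*} [CommSemiring E] [CommSemiring A]
    [Algebra K E] [Algebra E A] [Algebra K A] [IsScalarTower K E A] :
    (q.map (algebraMap K E)).HasNontrivialZero A ↔ q.HasNontrivialZero A := by
  simp only [HasNontrivialZero, aeval_map_algebraMap]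

theorem aeval_adjoinRoot_mk {σ R : Type*} [CommRing R] (f : R[X]) (q : MvPolynomial σ R)
    (g : σ → R[X]) :
    aeval (fun i => AdjoinRoot.mk f (g i)) q = AdjoinRoot.mk f (eval g (q.map Polynomial.C)) := by
  rw [eval_map, eval₂_comp_left, aeval_def, AdjoinRoot.algebraMap_eq]
  rfl

theorem hasNontrivialZero_adjoinRoot_of_dvd {σ R : Type*} [CommRing R] {q : MvPolynomial σ R}
    {p : R[X]} {g : σ → R[X]} (hg : ∃ i, ¬ p ∣ g i)
    (hp : p ∣ eval g (q.map Polynomial.C)) :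
    q.HasNontrivialZero (AdjoinRoot p) := by
  obtain ⟨i, hi⟩ := hg
  refine ⟨fun i => AdjoinRoot.mk p (g i), Function.ne_iff.mpr ⟨i, ?_⟩, ?_⟩
  · simpa [AdjoinRoot.mk_eq_zero] using hi
  · rwa [aeval_adjoinRoot_mk, AdjoinRoot.mk_eq_zero]

variable {σ K : Type*} [Fintype σ] [Field K] {q : MvPolynomial σ K}

theorem HasNontrivialZero.exists_primitive_lift {k : ℕ} (hq : q.IsHomogeneous k)
    {f : K[X]} (hf : Irreducible f) (h : q.HasNontrivialZero (AdjoinRoot f)) :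
    ∃ g : σ → K[X], (∀ i, (g i).natDegree < f.natDegree) ∧
      (∀ p, (∀ i, p ∣ g i) → IsUnit p) ∧ f ∣ eval g (q.map Polynomial.C) := by
  classical
  obtain ⟨w, hw0, hw⟩ := h
  have hf0 : f.natDegree ≠ 0 := hf.natDegree_pos.ne'
  choose r hr using fun i => AdjoinRoot.mk_surjective (w i)
  have hr_mod : ∀ i, AdjoinRoot.mk f (r i % f) = w i := fun i => by
    rw [← hr i, AdjoinRoot.mk_eq_mk, EuclideanDomain.mod_eq_sub_mul_div, sub_sub_cancel_left,
      dvd_neg]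
    exact dvd_mul_right _ _
  obtain ⟨j, hj⟩ := Function.ne_iff.mp hw0
  have hrj : r j % f ≠ 0 := fun h0 => hj (by rw [← hr_mod j, h0, map_zero, Pi.zero_apply])
  obtain ⟨g, hrg, hg1⟩ := Finset.univ.extract_gcd (fun i => r i % f) ⟨j, Finset.mem_univ j⟩
  set D := Finset.univ.gcd fun i => r i % f
  have hD : D ≠ 0 := fun h0 => hrj (by rw [hrg j (Finset.mem_univ j), h0, zero_mul])
  have hfD : ¬ f ∣ D := fun hdvd => (natDegree_mod_lt (r j) hf0).not_ge <|
    natDegree_le_of_dvd (hdvd.trans (Finset.gcd_dvd (Finset.mem_univ j))) hrj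
  refine ⟨g, fun i => ?_, fun p hp => ?_, ?_⟩
  · rcases eq_or_ne (g i) 0 with h0 | h0
    · rw [h0, natDegree_zero]
      exact Nat.pos_of_ne_zero hf0
    · have := natDegree_mod_lt (r i) hf0
      rw [hrg i (Finset.mem_univ i), natDegree_mul hD h0] at this
      omega
  · exact isUnit_of_dvd_one (hg1 ▸ Finset.dvd_gcd fun i _ => hp i)
  · have hDg : f ∣ D ^ k * eval g (q.map Polynomial.C) := by
      rw [← (hq.map Polynomial.C).eval_mul_left, ← AdjoinRoot.mk_eq_zero,
        ← aeval_adjoinRoot_mk]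
      simp_rw [← hrg _ (Finset.mem_univ _), hr_mod, hw]
    exact (hf.prime.dvd_or_dvd hDg).resolve_left fun h => hfD (hf.prime.dvd_of_dvd_pow h)

theorem HasNontrivialZero.of_adjoinRoot (hq : q.IsHomogeneous 2) {f : K[X]} (hf : Irreducible f)
    (hodd : Odd f.natDegree) (h : q.HasNontrivialZero (AdjoinRoot f)) :
    q.HasNontrivialZero K := by
  induction hd : f.natDegree using Nat.strong_induction_on generalizing f with
  | _ d ih =>
  obtain ⟨g, hg_lt, hg_prim, P, hP⟩ := h.exists_primitive_lift hq hf
  have hg0 : g ≠ 0 := fun h0 => not_isUnit_zero (hg_prim 0 fun i => by simp [h0])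
  obtain ⟨i₀, hi₀, hmax⟩ := exists_ne_zero_forall_natDegree_le hg0
  set m := (g i₀).natDegree
  by_cases hc : eval (fun i => (g i).coeff m) q = 0
  · refine ⟨fun i => (g i).coeff m, Function.ne_iff.mpr ⟨i₀, ?_⟩, hc⟩
    simpa [m] using hi₀
  have hdeg : f.natDegree + P.natDegree = 2 * m := by
    have hP0 : f * P ≠ 0 := fun h0 => hc <| by
      rw [← hq.coeff_eval_map_C hmax, hP, h0, Polynomial.coeff_zero]
    rw [← natDegree_mul (left_ne_zero_of_mul hP0) (right_ne_zero_of_mul hP0), ← hP]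
    exact (hq.natDegree_eval_map_C_le hmax).antisymm
      (le_natDegree_of_ne_zero (by rwa [hq.coeff_eval_map_C hmax]))
  have hPodd : Odd P.natDegree := by
    obtain ⟨j, hj⟩ := hodd
    exact ⟨m - j - 1, by omega⟩
  obtain ⟨p, hp, hpP, hp_odd⟩ := exists_irreducible_dvd_of_odd_natDegree hPodd
  have hp_lt : p.natDegree < d := by
    have := natDegree_le_of_dvd hpP (fun h0 => by simp [h0] at hPodd)
    have := hg_lt i₀
    omega
  refine ih _ hp_lt hp hp_odd (hasNontrivialZero_adjoinRoot_of_dvd (g := g) ?_ ?_) rfl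
  · by_contra! hall
    exact hp.not_isUnit (hg_prim p hall)
  · exact hP ▸ hpP.mul_left f

end MvPolynomial

namespace MvPolynomial

open IntermediateField Module

theorem HasNontrivialZero.of_odd_finrank {σ : Type*} [Fintype σ] {K L : Type u} [Field K]
    [Field L] [Algebra K L] [FiniteDimensional K L] (hodd : Odd (finrank K L))
    {q : MvPolynomial σ K} (hq : q.IsHomogeneous 2) (h : q.HasNontrivialZero L) :
    q.HasNontrivialZero K := by
  induction hd : finrank K L using Nat.strong_induction_on generalizing K with
  | _ d ih =>
  by_cases hsurj : Function.Surjective (algebraMap K L)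
  · let e := AlgEquiv.ofBijective (Algebra.ofId K L) ⟨(algebraMap K L).injective, hsurj⟩
    exact h.map e.symm.toAlgHom e.symm.injective
  obtain ⟨a, ha⟩ := not_forall.mp hsurj
  have ha_int : IsIntegral K a := .of_finite K a
  have hKa : 1 < finrank K K⟮a⟯ := by
    refine lt_of_le_of_ne finrank_pos fun h1 => ha ?_
    exact (adjoin_simple_eq_bot_iff.mp (finrank_eq_one_iff.mp h1.symm)).imp fun _ => id
  have htower := finrank_mul_finrank K K⟮a⟯ L
  obtain ⟨hKa_odd, haL_odd⟩ := Nat.odd_mul.mp (htower ▸ hodd)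
  have haL_lt : finrank K⟮a⟯ L < d := by
    rw [← hd, ← htower]
    exact lt_mul_left haL_odd.pos hKa
  have hKa_zero : q.HasNontrivialZero K⟮a⟯ := hasNontrivialZero_map_algebraMap_iff.mp <|
    ih _ haL_lt haL_odd (hq.map _) (hasNontrivialZero_map_algebraMap_iff.mpr h) rfl
  let e := adjoinRootEquivAdjoin K ha_int
  refine (hKa_zero.map e.symm.toAlgHom e.symm.injective).of_adjoinRoot hq
    (minpoly.irreducible ha_int) ?_
  rwa [← adjoin.finrank ha_int]

end MvPolynomial

open MvPolynomial in
theorem stmt_8 (K L : Type*) [Field K] [Field L] [Algebra K L]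
    [FiniteDimensional K L] (hodd : Odd (Module.finrank K L))
    (n : ℕ) (q : MvPolynomial (Fin n) K) (hq : q.IsHomogeneous 2)
    (hL : ∃ v : Fin n → L, v ≠ 0 ∧ eval v (q.map (algebraMap K L)) = 0) :
    ∃ w : Fin n → K, w ≠ 0 ∧ eval w q = 0 := by
  -- `of_odd_finrank` descends through fields `K⟮a⟯` in the universe of `L`, so it needs `K` and
  -- `L` in one universe.
  have : Small.{u_1} L := Module.Finite.small K L
  let e := Shrink.algEquiv K L
  have hL' : q.HasNontrivialZero L := by
    simpa only [HasNontrivialZero, MvPolynomial.eval_map, ← MvPolynomial.aeval_def] using hL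
  exact (hL'.map e.symm.toAlgHom e.symm.injective).of_odd_finrank
    (e.toLinearEquiv.finrank_eq ▸ hodd) hq
end

section
/- Let K be a field with a surjective discrete valuation v : K* → ℤ, with valuation ring O, uniformizer π, and residue field k. Let d ≥ 2 and let q = ⟨a_1,...,a_n⟩_d be a diagonal degree-d form with coefficients a_i ∈ O whose reduction mod π has no nontrivial zero over k. Then the form q' = q(x⃗_0) + π·q(x⃗_1) + ⋯ + π^{d-1}·q(x⃗_{d-1}) in dn variables has no nontrivial zero over K. -/
/-!
Clearing denominators, a nontrivial zero over `K` gives a nontrivial zero `z` over `O`.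
Since the reduction of `q` is anisotropic, `π ∣ q(x⃗)` forces `π ∣ x⃗`. Going up the blocks, if
`π` divides `z⃗_0, …, z⃗_{i-1}` then `π^(i+1)` divides every block but the `i`-th, hence also
`π^i q(z⃗_i)`, so `π ∣ z⃗_i`. Thus `z = π w` with `w` again a zero, and the resulting infinite
divisibility is impossible for `z ≠ 0`.
-/

open IsLocalRing

def diagonalForm {R ι : Type*} [CommRing R] [Fintype ι] (d : ℕ) (a : ι → R) (x : ι → R) : R :=
  ∑ j, a j * x j ^ d

section DiagonalForm

variable {R ι : Type*} [CommRing R] [Fintype ι] {d : ℕ} {a : ι → R}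

lemma diagonalForm_smul (c : R) (x : ι → R) :
    diagonalForm d a (c • x) = c ^ d * diagonalForm d a x := by
  simp only [diagonalForm, Pi.smul_apply, smul_eq_mul, Finset.mul_sum, mul_pow]
  exact Finset.sum_congr rfl fun _ _ ↦ by ring

lemma map_diagonalForm {S : Type*} [CommRing S] (f : R →+* S) (x : ι → R) :
    f (diagonalForm d a x) = diagonalForm d (f ∘ a) (f ∘ x) := by
  simp [diagonalForm]

lemma pow_dvd_diagonalForm {c : R} {x : ι → R} (hx : ∀ j, c ∣ x j) :
    c ^ d ∣ diagonalForm d a x :=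
  Finset.dvd_sum fun j _ ↦ (pow_dvd_pow_of_dvd (hx j) d).mul_left _

lemma dvd_of_dvd_diagonalForm [IsLocalRing R] {π : R} (hmax : maximalIdeal R = Ideal.span {π})
    (hres : ∀ x : ι → ResidueField R, x ≠ 0 → ∑ j, residue R (a j) * x j ^ d ≠ 0)
    {x : ι → R} (hdvd : π ∣ diagonalForm d a x) (j : ι) : π ∣ x j := by
  have dvd_iff (r : R) : π ∣ r ↔ residue R r = 0 := by
    rw [residue_eq_zero_iff, hmax, Ideal.mem_span_singleton]
  by_contra hj
  refine hres (residue R ∘ x) (fun h ↦ hj ((dvd_iff _).2 (congrFun h j))) ?_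
  simpa [map_diagonalForm, diagonalForm] using (dvd_iff _).1 hdvd

lemma exists_ne_zero_diagonalForm_eq_zero_of_fractionRing {K : Type*} [Field K] [Algebra R K]
    [IsFractionRing R K] {y : ι → K} (hy : y ≠ 0)
    (hq : diagonalForm d (algebraMap R K ∘ a) y = 0) :
    ∃ z : ι → R, z ≠ 0 ∧ diagonalForm d a z = 0 := by
  obtain ⟨b, hb⟩ := IsLocalization.exist_integer_multiples_of_finite (nonZeroDivisors R) y
  choose z hz using hb
  have hzy : algebraMap R K ∘ z = algebraMap R K b • y := by
    ext j
    simp [hz j, Algebra.smul_def]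
  have hb0 : algebraMap R K b ≠ 0 := (IsLocalization.map_units K b).ne_zero
  refine ⟨z, fun h ↦ hy ?_, IsFractionRing.injective R K ?_⟩
  · refine (smul_eq_zero.1 (hzy.symm.trans ?_)).resolve_left hb0
    simp [h]
  · rw [map_diagonalForm, hzy, diagonalForm_smul, hq, mul_zero, map_zero]

end DiagonalForm

section Layered

variable {O ι : Type*} [CommRing O] [IsDomain O] [Fintype ι] {π : O} {d : ℕ} {a : ι → O}

omit [IsDomain O] in
lemma diagonalForm_layered (z : Fin d × ι → O) :
    diagonalForm d (fun ij : Fin d × ι ↦ π ^ (ij.1 : ℕ) * a ij.2) z =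
      ∑ i : Fin d, π ^ (i : ℕ) * diagonalForm d a (fun j ↦ z (i, j)) := by
  simp only [diagonalForm, Fintype.sum_prod_type, Finset.mul_sum, mul_assoc]

variable (hπ : π ≠ 0) (hanis : ∀ x : ι → O, π ∣ diagonalForm d a x → ∀ j, π ∣ x j)
include hπ hanis

lemma dvd_of_layered_eq_zero {z : Fin d × ι → O}
    (hz : diagonalForm d (fun ij : Fin d × ι ↦ π ^ (ij.1 : ℕ) * a ij.2) z = 0) :
    ∀ ij, π ∣ z ij := by
  let Q (i : Fin d) : O := diagonalForm d a (fun j ↦ z (i, j))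
  replace hz : ∑ i : Fin d, π ^ (i : ℕ) * Q i = 0 := by rwa [diagonalForm_layered] at hz
  suffices h : ∀ i : Fin d, π ∣ Q i from fun ij ↦ hanis _ (h ij.1) ij.2
  intro i
  induction i using WellFoundedLT.induction with
  | _ i ih =>
  refine (mul_dvd_mul_iff_left (pow_ne_zero (i : ℕ) hπ)).1 ?_
  have hothers : π ^ ((i : ℕ) + 1) ∣ ∑ i' ∈ Finset.univ.erase i, π ^ (i' : ℕ) * Q i' := by
    refine Finset.dvd_sum fun i' hi' ↦ ?_
    rcases lt_or_gt_of_ne (Finset.ne_of_mem_erase hi') with hlt | hgt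
    · exact ((pow_dvd_pow π i.2).trans (pow_dvd_diagonalForm (hanis _ (ih i' hlt)))).mul_left _
    · exact (pow_dvd_pow π hgt).mul_right _
  rw [← pow_succ, ← dvd_add_left hothers,
    Finset.add_sum_erase _ (fun i' : Fin d ↦ π ^ (i' : ℕ) * Q i') (Finset.mem_univ i), hz]
  exact dvd_zero _

lemma pow_dvd_of_layered_eq_zero (k : ℕ) {z : Fin d × ι → O}
    (hz : diagonalForm d (fun ij : Fin d × ι ↦ π ^ (ij.1 : ℕ) * a ij.2) z = 0) :
    ∀ ij, π ^ k ∣ z ij := by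
  induction k generalizing z with
  | zero => simp
  | succ k ih =>
    choose w hw using dvd_of_layered_eq_zero hπ hanis hz
    have hzw : z = π • w := funext hw
    rw [hzw, diagonalForm_smul] at hz
    intro ij
    rw [hw ij, pow_succ']
    exact mul_dvd_mul_left π (ih ((mul_eq_zero.1 hz).resolve_left (pow_ne_zero d hπ)) ij)

lemma eq_zero_of_layered_eq_zero [WfDvdMonoid O] (hπu : ¬IsUnit π) {z : Fin d × ι → O}
    (hz : diagonalForm d (fun ij : Fin d × ι ↦ π ^ (ij.1 : ℕ) * a ij.2) z = 0) :
    z = 0 := by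
  ext ij
  by_contra hne
  obtain ⟨k, hk⟩ := FiniteMultiplicity.of_not_isUnit hπu hne
  exact hk (pow_dvd_of_layered_eq_zero hπ hanis (k + 1) hz ij)

end Layered

open IsLocalRing in
theorem stmt_11_general (O K : Type*) [CommRing O] [IsDomain O] [IsDiscreteValuationRing O]
    [Field K] [Algebra O K] [IsFractionRing O K]
    (π : O) (hπ : Irreducible π)
    (d : ℕ) (n : ℕ) (a : Fin n → O)
    (hres : ∀ x : Fin n → ResidueField O, x ≠ 0 →
      ∑ j, residue O (a j) * x j ^ d ≠ 0) :
    ∀ y : Fin d × Fin n → K, y ≠ 0 →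
      ∑ ij : Fin d × Fin n,
        algebraMap O K π ^ (ij.1 : ℕ) * algebraMap O K (a ij.2) * y ij ^ d ≠ 0 := by
  intro y hy hsum
  obtain ⟨z, hz0, hz⟩ := exists_ne_zero_diagonalForm_eq_zero_of_fractionRing
    (a := fun ij : Fin d × Fin n ↦ π ^ (ij.1 : ℕ) * a ij.2) hy
    (by simpa [diagonalForm] using hsum)
  have hanis : ∀ x : Fin n → O, π ∣ diagonalForm d a x → ∀ j, π ∣ x j := fun _ ↦
    dvd_of_dvd_diagonalForm ((IsDiscreteValuationRing.irreducible_iff_uniformizer π).1 hπ) hres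
  exact hz0 (eq_zero_of_layered_eq_zero hπ.ne_zero hanis hπ.not_isUnit hz)

open IsLocalRing in
theorem stmt_11 (O K : Type*) [CommRing O] [IsDomain O] [IsDiscreteValuationRing O]
    [Field K] [Algebra O K] [IsFractionRing O K]
    (π : O) (hπ : Irreducible π)
    (d : ℕ) (hd : 2 ≤ d) (n : ℕ) (a : Fin n → O)
    (hres : ∀ x : Fin n → ResidueField O, x ≠ 0 →
      ∑ j, residue O (a j) * x j ^ d ≠ 0) :
    ∀ y : Fin d × Fin n → K, y ≠ 0 →
      ∑ ij : Fin d × Fin n,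
        algebraMap O K π ^ (ij.1 : ℕ) * algebraMap O K (a ij.2) * y ij ^ d ≠ 0 :=
  stmt_11_general O K π hπ d n a hres
end

section
/- Let q > 1 be a real number and for each prime ℓ let e_ℓ be a positive integer with e_ℓ ≤ q^ℓ · C for a constant C, and suppose each prime number divides at most two of the e_ℓ. Define Ψ(n) = ∑_{p | n} 1/p. Then liminf over primes ℓ → ∞ of Ψ(e_ℓ) = 0. -/
/-!
Suppose `Ψ(e_ℓ) ≥ ε` for all primes `ℓ ≥ B`; summing over the primes `B ≤ ℓ ≤ X` gives at least
`ε (π(X) - B)`. Split each `Ψ(e_ℓ)` at `T = X²`. Since a prime divides at most two `e_ℓ`, the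
primes `p ≤ T` contribute at most `2 ∑_{p ≤ T} 1/p ≤ 2 (1 + log T)` in total, while `e_ℓ ≤ q^ℓ C`
has `O(ℓ)` prime factors, so the primes `p > T` contribute `O(X · X / T) = O(1)`. Hence
`π(X) = O(log X)`, contradicting Chebyshev's bound `π(X) ≫ X / log X`.
-/

open Finset Real Filter Asymptotics

noncomputable def sumInvPrimeFactors (n : ℕ) : ℝ := ∑ p ∈ n.primeFactors, (1 : ℝ) / p

theorem card_primeFactors_mul_log_two_le_log {n : ℕ} (hn : n ≠ 0) :
    #n.primeFactors * log 2 ≤ log n := by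
  have h : 2 ^ #n.primeFactors ≤ n :=
    calc 2 ^ #n.primeFactors ≤ ∏ p ∈ n.primeFactors, p :=
          pow_card_le_prod _ _ _ fun p hp ↦ (Nat.prime_of_mem_primeFactors hp).two_le
      _ ≤ n := Nat.le_of_dvd (Nat.pos_of_ne_zero hn) (Nat.prod_primeFactors_dvd n)
  rw [← log_pow]
  exact log_le_log (by positivity) (by exact_mod_cast h)

theorem card_primeFactors_le_of_le_pow_mul {n ℓ : ℕ} {q C : ℝ} (hn : n ≠ 0) (hq : 1 ≤ q)
    (hℓ : 1 ≤ ℓ) (h : n ≤ q ^ ℓ * C) : (#n.primeFactors : ℝ) ≤ log (q * max C 1) / log 2 * ℓ := by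
  have hq' : 1 ≤ q * max C 1 := one_le_mul_of_one_le_of_one_le hq (le_max_right _ _)
  have hpow : (n : ℝ) ≤ (q * max C 1) ^ ℓ :=
    calc (n : ℝ) ≤ q ^ ℓ * max C 1 := h.trans (by gcongr; exact le_max_left _ _)
      _ ≤ q ^ ℓ * max C 1 ^ ℓ := by
          gcongr; exact le_self_pow₀ (le_max_right _ _) (by omega)
      _ = (q * max C 1) ^ ℓ := (mul_pow _ _ _).symm
  have hlog : log n ≤ ℓ * log (q * max C 1) := by
    rw [← log_pow]; exact log_le_log (by positivity) hpow
  rw [div_mul_eq_mul_div, le_div_iff₀ (log_pos one_lt_two)]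
  linarith [card_primeFactors_mul_log_two_le_log hn]

theorem sumInvPrimeFactors_le_add_card_div (n T : ℕ) :
    sumInvPrimeFactors n ≤
      ∑ p ∈ n.primeFactors with p ≤ T, (1 : ℝ) / p + #n.primeFactors / (T + 1) := by
  rw [sumInvPrimeFactors, ← sum_filter_add_sum_filter_not _ (fun p : ℕ ↦ p ≤ T)]
  gcongr
  calc ∑ p ∈ n.primeFactors with ¬p ≤ T, (1 : ℝ) / p
      ≤ #{p ∈ n.primeFactors | ¬p ≤ T} • (1 / (T + 1) : ℝ) := by
        refine sum_le_card_nsmul _ _ _ fun p hp ↦ ?_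
        have : (T : ℝ) + 1 ≤ p := by exact_mod_cast Nat.lt_of_not_le (mem_filter.1 hp).2
        gcongr
    _ ≤ #n.primeFactors / (T + 1) := by
        rw [nsmul_eq_mul, mul_one_div]; gcongr; exact filter_subset _ _

theorem sum_sum_inv_primeFactors_le_mul {ι : Type*} (s : Finset ι) (f : ι → ℕ) (k T : ℕ)
    (hk : ∀ p, p.Prime → #{i ∈ s | p ∣ f i} ≤ k) :
    ∑ i ∈ s, ∑ p ∈ (f i).primeFactors with p ≤ T, (1 : ℝ) / p ≤
      k * ∑ p ∈ Nat.primesLE T, (1 : ℝ) / p :=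
  calc ∑ i ∈ s, ∑ p ∈ (f i).primeFactors with p ≤ T, (1 : ℝ) / p
      = ∑ p ∈ Nat.primesLE T, ∑ i ∈ s with p ∈ (f i).primeFactors, (1 : ℝ) / p :=
        sum_comm' fun i p ↦ by
          simp only [mem_filter, Nat.mem_primesLE, Nat.mem_primeFactors]; tauto
    _ ≤ ∑ p ∈ Nat.primesLE T, k * ((1 : ℝ) / p) := by
        gcongr with p hp
        rw [sum_const, nsmul_eq_mul]
        gcongr
        refine (card_le_card fun i hi ↦ ?_).trans (hk p (Nat.prime_of_mem_primesLE hp))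
        simp only [mem_filter, Nat.mem_primeFactors] at hi ⊢
        exact ⟨hi.1, hi.2.2.1⟩
    _ = k * ∑ p ∈ Nat.primesLE T, (1 : ℝ) / p := (mul_sum _ _ _).symm

theorem primesLE_subset_Icc_one (n : ℕ) : Nat.primesLE n ⊆ Icc 1 n :=
  (Nat.primesLE_eq_filter_Ioc_one n ▸ filter_subset _ _).trans Ioc_subset_Icc_self

theorem sum_inv_primesLE_le_one_add_log (T : ℕ) :
    ∑ p ∈ Nat.primesLE T, (1 : ℝ) / p ≤ 1 + log T :=
  calc ∑ p ∈ Nat.primesLE T, (1 : ℝ) / p ≤ ∑ i ∈ Icc 1 T, (i : ℝ)⁻¹ := by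
        simp_rw [one_div]
        exact sum_le_sum_of_subset_of_nonneg (primesLE_subset_Icc_one T) fun _ _ _ ↦ by positivity
    _ = harmonic T := by simp [harmonic_eq_sum_Icc]
    _ ≤ 1 + log T := harmonic_le_one_add_log T

theorem sum_sumInvPrimeFactors_le {ι : Type*} (s : Finset ι) (f : ι → ℕ) (k T : ℕ)
    (hk : ∀ p, p.Prime → #{i ∈ s | p ∣ f i} ≤ k) :
    ∑ i ∈ s, sumInvPrimeFactors (f i) ≤
      k * (1 + log T) + (∑ i ∈ s, #(f i).primeFactors : ℝ) / (T + 1) :=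
  calc ∑ i ∈ s, sumInvPrimeFactors (f i)
      ≤ ∑ i ∈ s, (∑ p ∈ (f i).primeFactors with p ≤ T, (1 : ℝ) / p +
          #(f i).primeFactors / (T + 1)) :=
        sum_le_sum fun i _ ↦ sumInvPrimeFactors_le_add_card_div _ _
    _ ≤ k * (1 + log T) + (∑ i ∈ s, #(f i).primeFactors : ℝ) / (T + 1) := by
        rw [sum_add_distrib, ← sum_div]
        gcongr
        exact (sum_sum_inv_primeFactors_le_mul s f k T hk).trans
          (by gcongr; exact sum_inv_primesLE_le_one_add_log T)

theorem eventually_add_mul_log_lt_primeCounting (a b : ℝ) :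
    ∀ᶠ n : ℕ in atTop, a + b * log n < Nat.primeCounting n := by
  have hlog2 : 0 < log 2 := log_pos one_lt_two
  have ho : (fun x ↦ log 2 + (a + 1) * log x + b * log x ^ 2) =o[atTop] id :=
    ((isLittleO_const_id_atTop _).add (isLittleO_log_id_atTop.const_mul_left _)).add
      (isLittleO_pow_log_id_atTop.const_mul_left _)
  filter_upwards [tendsto_natCast_atTop_atTop.eventually (ho.bound (half_pos hlog2)),
    eventually_ge_atTop 2] with n hn h2
  have hn1 : (1 : ℝ) < n := by exact_mod_cast h2
  have hlogn : 0 < log n := log_pos hn1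
  have hpsi : n * log 2 - log (n + 1) ≤ Nat.primeCounting n * log n :=
    (Chebyshev.psi_ge n).trans (Chebyshev.psi_le_primeCounting_mul_log n)
  have hsucc : log (n + 1) ≤ log 2 + log n := by
    rw [← log_mul two_ne_zero (by positivity)]
    exact log_le_log (by positivity) (by linarith)
  have hsmall : log 2 + (a + 1) * log n + b * log n ^ 2 < n * log 2 := by
    have := (le_abs_self _).trans hn
    rw [Real.norm_eq_abs, id, abs_of_pos (by positivity : (0 : ℝ) < n)] at this
    nlinarith
  refine lt_of_mul_lt_mul_right ?_ hlogn.le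
  nlinarith

theorem primeCounting_le_card_filter_le_add (X B : ℕ) :
    Nat.primeCounting X ≤ #{ℓ ∈ Nat.primesLE X | B ≤ ℓ} + B :=
  calc Nat.primeCounting X
      = #{ℓ ∈ Nat.primesLE X | B ≤ ℓ} + #{ℓ ∈ Nat.primesLE X | ¬B ≤ ℓ} := by
        rw [← Nat.primesLE_card_eq_primeCounting]
        exact (card_filter_add_card_filter_not _).symm
    _ ≤ #{ℓ ∈ Nat.primesLE X | B ≤ ℓ} + B := by
        gcongr
        exact (card_le_card fun ℓ hℓ ↦ by simp at hℓ ⊢; omega).trans_eq (card_range B)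

theorem sum_sumInvPrimeFactors_le_of_subset_primesLE {q C : ℝ} {e : ℕ → ℕ} (hq : 1 ≤ q)
    (hpos : ∀ ℓ, ℓ.Prime → 1 ≤ e ℓ)
    (hbd : ∀ ℓ, ℓ.Prime → (e ℓ : ℝ) ≤ q ^ ℓ * C)
    (htwo : ∀ p, p.Prime → ∀ ℓ₁ ℓ₂ ℓ₃ : ℕ, ℓ₁.Prime → ℓ₂.Prime → ℓ₃.Prime →
      ℓ₁ ≠ ℓ₂ → ℓ₁ ≠ ℓ₃ → ℓ₂ ≠ ℓ₃ → ¬ (p ∣ e ℓ₁ ∧ p ∣ e ℓ₂ ∧ p ∣ e ℓ₃))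
    {s : Finset ℕ} {X : ℕ} (hs : s ⊆ Nat.primesLE X) :
    ∑ ℓ ∈ s, sumInvPrimeFactors (e ℓ) ≤ 2 * (1 + 2 * log X) + log (q * max C 1) / log 2 := by
  set D := log (q * max C 1) / log 2
  have hprime : ∀ ℓ ∈ s, ℓ.Prime := fun ℓ hℓ ↦ Nat.prime_of_mem_primesLE (hs hℓ)
  have hsX : ∀ ℓ ∈ s, ℓ ≤ X := fun ℓ hℓ ↦ (Nat.mem_primesLE.1 (hs hℓ)).1
  have hD : 0 ≤ D := div_nonneg (log_nonneg (one_le_mul_of_one_le_of_one_le hq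
    (le_max_right _ _))) (log_pos one_lt_two).le
  have hk : ∀ p, p.Prime → #{ℓ ∈ s | p ∣ e ℓ} ≤ 2 := by
    intro p hp
    by_contra! h3
    obtain ⟨a, b, c, ha, hb, hc, hab, hac, hbc⟩ := two_lt_card_iff.1 h3
    simp only [mem_filter] at ha hb hc
    exact htwo p hp a b c (hprime a ha.1) (hprime b hb.1) (hprime c hc.1) hab hac hbc
      ⟨ha.2, hb.2, hc.2⟩
  have hω : (∑ ℓ ∈ s, #(e ℓ).primeFactors : ℝ) ≤ D * X ^ 2 :=
    calc (∑ ℓ ∈ s, #(e ℓ).primeFactors : ℝ) ≤ ∑ ℓ ∈ s, D * X := by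
          refine sum_le_sum fun ℓ hℓ ↦ ?_
          refine (card_primeFactors_le_of_le_pow_mul
            (Nat.one_le_iff_ne_zero.mp (hpos ℓ (hprime ℓ hℓ))) hq (hprime ℓ hℓ).one_le
            (hbd ℓ (hprime ℓ hℓ))).trans ?_
          gcongr
          exact_mod_cast hsX ℓ hℓ
      _ ≤ D * X ^ 2 := by
          have : (#s : ℝ) ≤ X := by
            exact_mod_cast (card_le_card (hs.trans (primesLE_subset_Icc_one X))).trans
              (by simp)
          rw [sum_const, nsmul_eq_mul]
          nlinarith [mul_le_mul_of_nonneg_right this (mul_nonneg hD (Nat.cast_nonneg X))]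
  refine (sum_sumInvPrimeFactors_le s e 2 (X ^ 2) hk).trans ?_
  push_cast
  rw [log_pow]
  gcongr
  · norm_num
  · rw [div_le_iff₀ (by positivity)]
    nlinarith

theorem stmt_17_general (q C : ℝ) (hq : 1 < q) (e : ℕ → ℕ)
    (hpos : ∀ ℓ, ℓ.Prime → 1 ≤ e ℓ)
    (hbd : ∀ ℓ, ℓ.Prime → (e ℓ : ℝ) ≤ q ^ ℓ * C)
    (htwo : ∀ p, p.Prime → ∀ ℓ₁ ℓ₂ ℓ₃ : ℕ, ℓ₁.Prime → ℓ₂.Prime → ℓ₃.Prime →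
      ℓ₁ ≠ ℓ₂ → ℓ₁ ≠ ℓ₃ → ℓ₂ ≠ ℓ₃ →
      ¬ (p ∣ e ℓ₁ ∧ p ∣ e ℓ₂ ∧ p ∣ e ℓ₃)) :
    ∀ ε : ℝ, 0 < ε → ∀ B : ℕ, ∃ ℓ, B ≤ ℓ ∧ ℓ.Prime ∧
      ∑ p ∈ (e ℓ).primeFactors, (1 : ℝ) / p < ε := by
  intro ε hε B
  by_contra! hbig
  set D := log (q * max C 1) / log 2
  obtain ⟨X, hX⟩ := (eventually_add_mul_log_lt_primeCounting (B + (2 + D) / ε) (4 / ε)).exists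
  set s := {ℓ ∈ Nat.primesLE X | B ≤ ℓ}
  have hlow : ε * (Nat.primeCounting X - B) ≤ ∑ ℓ ∈ s, sumInvPrimeFactors (e ℓ) :=
    calc ε * (Nat.primeCounting X - B) ≤ #s • ε := by
          rw [nsmul_eq_mul, mul_comm]
          gcongr
          rw [sub_le_iff_le_add]
          exact_mod_cast primeCounting_le_card_filter_le_add X B
      _ ≤ ∑ ℓ ∈ s, sumInvPrimeFactors (e ℓ) := card_nsmul_le_sum _ _ _ fun ℓ hℓ ↦ by
          simp only [s, mem_filter] at hℓ
          exact hbig ℓ hℓ.2 (Nat.prime_of_mem_primesLE hℓ.1)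
  have hup := sum_sumInvPrimeFactors_le_of_subset_primesLE hq.le hpos hbd htwo
    (filter_subset (B ≤ ·) (Nat.primesLE X))
  have hX' := mul_lt_mul_of_pos_left hX hε
  rw [show ε * (B + (2 + D) / ε + 4 / ε * log X) = ε * B + 2 + D + 4 * log X by
    field_simp; ring] at hX'
  linarith

theorem stmt_17 (q C : ℝ) (hq : 1 < q) (hC : 0 < C) (e : ℕ → ℕ)
    (hpos : ∀ ℓ, ℓ.Prime → 1 ≤ e ℓ)
    (hbd : ∀ ℓ, ℓ.Prime → (e ℓ : ℝ) ≤ q ^ ℓ * C)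
    (htwo : ∀ p, p.Prime → ∀ ℓ₁ ℓ₂ ℓ₃ : ℕ, ℓ₁.Prime → ℓ₂.Prime → ℓ₃.Prime →
      ℓ₁ ≠ ℓ₂ → ℓ₁ ≠ ℓ₃ → ℓ₂ ≠ ℓ₃ →
      ¬ (p ∣ e ℓ₁ ∧ p ∣ e ℓ₂ ∧ p ∣ e ℓ₃)) :
    ∀ ε : ℝ, 0 < ε → ∀ B : ℕ, ∃ ℓ, B ≤ ℓ ∧ ℓ.Prime ∧
      ∑ p ∈ (e ℓ).primeFactors, (1 : ℝ) / p < ε :=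
  stmt_17_general q C hq e hpos hbd htwo
end
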